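/- arXiv:2002.05685 — 2 statements merged into one kernel-verified Lean document; each statement's English description precedes it below -/
import Mathlib

section
/- Kummer's transformation: for all reals a, b with b not a nonpositive integer and all real x, e^x · ₁F₁(a; b; -x) = ₁F₁(b - a; b; x). -/
/-!
Multiply the two series and compare coefficients of `x ^ n`. After clearing the denominator
`n! (b)ₙ`, using `(b)ₙ = (b)ᵢ (b + i)ⱼ` for `i + j = n`, the claim becomes the identity
`(b - a)ₙ = ∑_{i+j=n} C(n,i) (-1)ⁱ (a)ᵢ (b + i)ⱼ`. Rewritten with falling factorials,
`(b - a)ₙ = (b - a + n - 1)⁽ⁿ⁾`, `(-1)ⁱ (a)ᵢ = (-a)⁽ⁱ⁾` and `(b + i)ⱼ = (b + n - 1)⁽ʲ⁾`,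
this is the Chu–Vandermonde identity for `(-a) + (b + n - 1)`.
-/

open Real

/-- The Kummer confluent hypergeometric function ₁F₁(a; b; z), defined by its
power series with rising factorials (Pochhammer symbols). -/
noncomputable def kummer (a b z : ℝ) : ℝ :=
  ∑' n : ℕ, ((ascPochhammer ℝ n).eval a / (ascPochhammer ℝ n).eval b) * z ^ n / n.factorial

open Polynomial Finset Filter Topology

section Pochhammer

variable {R : Type*} [CommRing R]

theorem descPochhammer_eval_add (r s : R) (n : ℕ) :
    (descPochhammer R n).eval (r + s) = ∑ ij ∈ antidiagonal n,
      n.choose ij.1 * ((descPochhammer R ij.1).eval r * (descPochhammer R ij.2).eval s) := by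
  have h (k : ℕ) (t : R) : (descPochhammer ℤ k).smeval t = (descPochhammer R k).eval t := by
    rw [← aeval_eq_smeval, aeval_def, ← eval_map, descPochhammer_map]
  simpa only [h] using Ring.descPochhammer_smeval_add n (Commute.all r s)

theorem descPochhammer_eval_neg (r : R) (n : ℕ) :
    (descPochhammer R n).eval (-r) = (-1) ^ n * (ascPochhammer R n).eval r := by
  rw [← neg_neg r, ascPochhammer_eval_neg_eq_descPochhammer, neg_neg, ← mul_assoc, ← mul_pow]
  simp

theorem ascPochhammer_add_eval (r : R) (m n : ℕ) :
    (ascPochhammer R (m + n)).eval r =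
      (ascPochhammer R m).eval r * (ascPochhammer R n).eval (r + m) := by
  rw [← ascPochhammer_mul, eval_mul, eval_comp]
  simp

theorem ascPochhammer_eval_sub_eq_sum (a b : R) (n : ℕ) :
    (ascPochhammer R n).eval (b - a) = ∑ ij ∈ antidiagonal n,
      n.choose ij.1 * ((-1) ^ ij.1 * (ascPochhammer R ij.1).eval a *
        (ascPochhammer R ij.2).eval (b + ij.1)) := by
  calc (ascPochhammer R n).eval (b - a)
      = (descPochhammer R n).eval (-a + (b + n - 1)) := by
        rw [descPochhammer_eval_eq_ascPochhammer]
        congr 1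
        ring
    _ = _ := by
        rw [descPochhammer_eval_add]
        refine sum_congr rfl fun ij hij => ?_
        have hb : b + (n : R) - 1 - ij.2 + 1 = b + ij.1 := by
          rw [← HasAntidiagonal.mem_antidiagonal.mp hij]
          push_cast
          ring
        rw [descPochhammer_eval_neg, descPochhammer_eval_eq_ascPochhammer, hb, mul_assoc]

end Pochhammer

noncomputable def kummerTerm (a b z : ℝ) (n : ℕ) : ℝ :=
  (ascPochhammer ℝ n).eval a / (ascPochhammer ℝ n).eval b * z ^ n / n.factorial

-- Valid for every `b`: where `(b)ₙ₊₁ = 0` both sides vanish, as `x / 0 = 0`.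
theorem kummerTerm_succ (a b z : ℝ) (n : ℕ) :
    kummerTerm a b z (n + 1) = kummerTerm a b z n * ((a + n) / (b + n) * (z / (n + 1))) := by
  simp only [kummerTerm, ascPochhammer_succ_eval, pow_succ, Nat.factorial_succ, Nat.cast_mul,
    Nat.cast_succ, div_eq_mul_inv, mul_inv]
  ring

theorem tendsto_kummerTerm_ratio (a b z : ℝ) :
    Tendsto (fun n : ℕ => (a + n) / (b + n) * (z / (n + 1))) atTop (𝓝 0) := by
  have h1 : Tendsto (fun n : ℕ => (a + n) / (b + n)) atTop (𝓝 1) := by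
    simpa using tendsto_add_mul_div_add_mul_atTop_nhds a b (1 : ℝ) one_ne_zero
  have h2 : Tendsto (fun n : ℕ => z / (n + 1)) atTop (𝓝 0) := by
    simpa [div_eq_mul_one_div z] using (tendsto_one_div_add_atTop_nhds_zero_nat (𝕜 := ℝ)).const_mul z
  simpa using h1.mul h2

theorem summable_norm_kummerTerm (a b z : ℝ) : Summable fun n => ‖kummerTerm a b z n‖ := by
  refine summable_of_ratio_norm_eventually_le (r := 1 / 2) (by norm_num) ?_
  filter_upwards [(tendsto_kummerTerm_ratio a b z).norm.eventually_le_const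
    (show ‖(0 : ℝ)‖ < 1 / 2 by norm_num)] with n hn
  rw [norm_norm, norm_norm, kummerTerm_succ, norm_mul, mul_comm]
  exact mul_le_mul_of_nonneg_right hn (norm_nonneg _)

theorem kummerTerm_neg_mul_pow_div_factorial (a b x : ℝ) {i j : ℕ}
    (hb : (ascPochhammer ℝ (i + j)).eval b ≠ 0) :
    kummerTerm a b (-x) i * (x ^ j / j.factorial) =
      x ^ (i + j) / ((i + j).factorial * (ascPochhammer ℝ (i + j)).eval b) *
        ((i + j).choose i * ((-1) ^ i * (ascPochhammer ℝ i).eval a *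
          (ascPochhammer ℝ j).eval (b + i))) := by
  rw [ascPochhammer_add_eval] at hb ⊢
  obtain ⟨hbi, hbj⟩ := mul_ne_zero_iff.mp hb
  rw [← Nat.add_choose_mul_factorial_mul_factorial, Nat.choose_symm_add, kummerTerm, neg_pow,
    pow_add]
  have hchoose : ((i + j).choose j : ℝ) ≠ 0 := mod_cast (Nat.choose_pos (Nat.le_add_left j i)).ne'
  field_simp
  push_cast
  ring

theorem sum_antidiagonal_kummerTerm_neg_mul_pow_div_factorial (a b x : ℝ) {n : ℕ}
    (hb : (ascPochhammer ℝ n).eval b ≠ 0) :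
    ∑ ij ∈ antidiagonal n, kummerTerm a b (-x) ij.1 * (x ^ ij.2 / ij.2.factorial) =
      kummerTerm (b - a) b x n := by
  calc ∑ ij ∈ antidiagonal n, kummerTerm a b (-x) ij.1 * (x ^ ij.2 / ij.2.factorial)
      = ∑ ij ∈ antidiagonal n, x ^ n / (n.factorial * (ascPochhammer ℝ n).eval b) *
          (n.choose ij.1 * ((-1) ^ ij.1 * (ascPochhammer ℝ ij.1).eval a *
            (ascPochhammer ℝ ij.2).eval (b + ij.1))) := by
        refine sum_congr rfl fun ij hij => ?_
        rw [HasAntidiagonal.mem_antidiagonal] at hij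
        subst hij
        exact kummerTerm_neg_mul_pow_div_factorial a b x hb
    _ = kummerTerm (b - a) b x n := by
        rw [← mul_sum, ← ascPochhammer_eval_sub_eq_sum, kummerTerm]
        ring

theorem stmt_6 (a b x : ℝ) (hb : ∀ n : ℕ, b ≠ -(n : ℝ)) :
    Real.exp x * kummer a b (-x) = kummer (b - a) b x := by
  have hb' (n : ℕ) : (ascPochhammer ℝ n).eval b ≠ 0 := by
    simpa using fun k _ h => hb k (by linarith)
  rw [Real.exp_eq_exp_ℝ, ← (NormedSpace.expSeries_div_hasSum_exp x).tsum_eq, mul_comm]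
  change (∑' n, kummerTerm a b (-x) n) * _ = ∑' n, kummerTerm (b - a) b x n
  rw [tsum_mul_tsum_eq_tsum_sum_antidiagonal_of_summable_norm (summable_norm_kummerTerm a b (-x))
    (NormedSpace.norm_expSeries_div_summable x)]
  exact tsum_congr fun n => sum_antidiagonal_kummerTerm_neg_mul_pow_div_factorial a b x (hb' n)
end

section
/- For α ∈ (0,1) and x > 0, the series (1/π) Σ_{n=1}^∞ ((-1)^{n+1}/n!) Γ(1+αn) sin(παn/2) / x^{αn+1} converges absolutely. -/
/-!
Log-convexity of `Γ` between `1` and `n + 1` gives `Γ(1 + αn) ≤ (n!)^α`, so the `n`-th term is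
at most `(πx)⁻¹ (x^{-α})^n / (n!)^{1-α}`; since `1 - α > 0`, the ratio of consecutive bounds is
`x^{-α} / (n+1)^{1-α} → 0`.
-/

open Real Filter Nat Topology

lemma summable_pow_div_factorial_rpow {β : ℝ} (hβ : 0 < β) (r : ℝ) :
    Summable fun n : ℕ => r ^ n / (n ! : ℝ) ^ β := by
  have hratio : Tendsto (fun n : ℕ => |r| * ((n : ℝ) + 1) ^ (-β)) atTop (𝓝 0) := by
    simpa using ((tendsto_rpow_neg_atTop hβ).comp
      (tendsto_atTop_add_const_right atTop 1 tendsto_natCast_atTop_atTop)).const_mul |r|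
  refine summable_of_ratio_norm_eventually_le (r := 1 / 2) (by norm_num) ?_
  filter_upwards [hratio.eventually (ge_mem_nhds (by norm_num : (0 : ℝ) < 1 / 2))] with n hn
  have hstep : ‖r ^ (n + 1) / ((n + 1)! : ℝ) ^ β‖
      = |r| * ((n : ℝ) + 1) ^ (-β) * ‖r ^ n / (n ! : ℝ) ^ β‖ := by
    have hn1 : (0 : ℝ) < (n : ℝ) + 1 := by positivity
    have hfac (m : ℕ) : ‖(m ! : ℝ) ^ β‖ = (m ! : ℝ) ^ β := norm_of_nonneg (by positivity)
    rw [norm_div, norm_div, hfac, hfac, norm_pow, norm_pow, Real.norm_eq_abs, factorial_succ,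
      cast_mul, cast_add_one, mul_rpow hn1.le (by positivity), rpow_neg hn1.le, pow_succ]
    field_simp
  rw [hstep]
  gcongr

lemma Gamma_one_add_mul_natCast_le_factorial_rpow {α : ℝ} (hα0 : 0 < α) (hα1 : α < 1) (n : ℕ) :
    Gamma (1 + α * n) ≤ (n ! : ℝ) ^ α := by
  have h := Gamma_mul_add_mul_le_rpow_Gamma_mul_rpow_Gamma (s := n + 1) (t := 1)
    (by positivity) one_pos hα0 (sub_pos.2 hα1) (add_sub_cancel α 1)
  rwa [Gamma_nat_eq_factorial, Gamma_one, one_rpow, mul_one, mul_one, mul_add, mul_one,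
    add_assoc, add_sub_cancel, add_comm] at h

theorem stmt_17 (α : ℝ) (hα : α ∈ Set.Ioo 0 1) (x : ℝ) (hx : 0 < x) :
    Summable (fun n : ℕ =>
      |(1 / Real.pi) * ((-1 : ℝ) ^ ((n + 1) + 1) / (Nat.factorial (n + 1)))
        * Real.Gamma (1 + α * (n + 1)) * Real.sin (Real.pi * α * (n + 1) / 2)
        / x ^ (α * (n + 1) + 1)|) := by
  obtain ⟨hα0, hα1⟩ := hα
  have hsum := (summable_nat_add_iff 1).2
    (summable_pow_div_factorial_rpow (sub_pos.2 hα1) (x ^ α)⁻¹)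
  refine (hsum.mul_left (π⁻¹ * x⁻¹)).of_nonneg_of_le (fun n => abs_nonneg _) fun n => ?_
  have hΓ := Gamma_one_add_mul_natCast_le_factorial_rpow hα0 hα1 (n + 1)
  have hfac : (0 : ℝ) < (n + 1)! := by positivity
  have hpow : x ^ (α * ((n : ℝ) + 1) + 1) = (x ^ α) ^ (n + 1) * x := by
    rw [rpow_add_one hx.ne', mul_comm, rpow_mul hx.le, ← rpow_natCast]; push_cast; ring
  push_cast at hΓ
  rw [hpow, rpow_sub hfac, rpow_one]
  simp only [abs_div, abs_mul, abs_pow, abs_neg, abs_one, one_pow, abs_of_pos pi_pos,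
    abs_of_pos hfac, abs_of_pos (Gamma_pos_of_pos (by positivity : 0 < 1 + α * ((n : ℝ) + 1))),
    abs_of_pos hx, abs_of_pos (rpow_pos_of_pos hx α)]
  calc 1 / π * (1 / ((n + 1)! : ℝ)) * Gamma (1 + α * (n + 1)) * |sin (π * α * (n + 1) / 2)|
        / ((x ^ α) ^ (n + 1) * x)
      ≤ 1 / π * (1 / ((n + 1)! : ℝ)) * ((n + 1)! : ℝ) ^ α * 1 / ((x ^ α) ^ (n + 1) * x) := by
        gcongr
        exact abs_sin_le_one _
    _ = _ := by rw [inv_pow]; field_simp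
end
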